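/- Let M be a positroid with Grassmann necklace (I_1,...,I_n), let j be a non-fixed-point of its decorated permutation, and let (K_1,...,K_n) be the Grassmann necklace of M' = { H ∈ M : j ∈ H }. Then for all a ∈ [n]: K_a = I_a if j ∈ I_a, and K_a = (I_a \ {max_a(I_a \ I_j)}) ∪ {j} if j ∉ I_a. -/

import Mathlib

open Finset

/-- Position of `a` in the cyclic (linear) order starting at `t` on `Fin n`. -/
def cval {n : ℕ} (t a : Fin n) : ℕ := ((a - t : Fin n) : ℕ)

/-- Gale order on finsets of `Fin n` induced by the linear order with key `f`:
compare the sorted lists of keys coordinatewise. -/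
def galeLEKey {n : ℕ} (f : Fin n → ℕ) (A B : Finset (Fin n)) : Prop :=
  List.Forall₂ (· ≤ ·) ((A.image f).sort (· ≤ ·)) ((B.image f).sort (· ≤ ·))

/-- Gale order `≤_t` induced by the cyclic order starting at `t`. -/
def galeLE {n : ℕ} (t : Fin n) (A B : Finset (Fin n)) : Prop :=
  galeLEKey (cval t) A B

/-- The set of maximal elements of `D` w.r.t. `≤_a` (a singleton when `D` is nonempty). -/
def cmax {n : ℕ} (a : Fin n) (D : Finset (Fin n)) : Finset (Fin n) :=
  D.filter (fun x => ∀ y ∈ D, cval a y ≤ cval a x)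

/-- The set of minimal elements of `D` w.r.t. `≤_a` (a singleton when `D` is nonempty). -/
def cmin {n : ℕ} (a : Fin n) (D : Finset (Fin n)) : Finset (Fin n) :=
  D.filter (fun x => ∀ y ∈ D, cval a x ≤ cval a y)

/-- A Grassmann necklace on `[n]`. -/
def IsGrassmannNecklace {n : ℕ} [NeZero n] (I : Fin n → Finset (Fin n)) : Prop :=
  ∀ i : Fin n,
    (i ∈ I i → ∃ j : Fin n, I (i + 1) = insert j (I i \ {i})) ∧
    (i ∉ I i → I (i + 1) = I i)

/-- A decorated permutation: a permutation with fixed points colored by `1` or `-1`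
(non-fixed points carry the dummy color `1`). -/
structure DecoratedPerm (n : ℕ) where
  π : Equiv.Perm (Fin n)
  col : Fin n → ℤ
  col_fixed : ∀ i, π i = i → col i = 1 ∨ col i = -1
  col_nonfixed : ∀ i, π i ≠ i → col i = 1

/-- The Grassmann necklace associated to a decorated permutation:
`I_r = { i : i <_r π⁻¹(i), or π(i) = i and col(i) = -1 }`. -/
def necklaceOf {n : ℕ} (P : DecoratedPerm n) : Fin n → Finset (Fin n) :=
  fun r => Finset.univ.filter
    (fun i => cval r i < cval r (P.π.symm i) ∨ (P.π i = i ∧ P.col i = -1))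

/-- The forward map from Grassmann necklaces to decorated permutations:
`P` corresponds to the necklace `I`. -/
def Corresponds {n : ℕ} [NeZero n] (I : Fin n → Finset (Fin n)) (P : DecoratedPerm n) : Prop :=
  ∀ i : Fin n,
    ((I (i + 1) = I i ∧ i ∉ I i) → (P.π i = i ∧ P.col i = 1)) ∧
    ((I (i + 1) = I i ∧ i ∈ I i) → (P.π i = i ∧ P.col i = -1)) ∧
    (∀ j : Fin n, j ≠ i → i ∈ I i → I (i + 1) = insert j (I i \ {i}) → P.π i = j)

/-- `phiSet I j a` is `{j}` if `j ∈ I_a`, and otherwise `{max_a (I_a \ I_j)}`. -/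
def phiSet {n : ℕ} (I : Fin n → Finset (Fin n)) (j a : Fin n) : Finset (Fin n) :=
  if j ∈ I a then {j} else cmax a (I a \ I j)

/-- One pass of the contraction algorithm (fuel-indexed; the loop walks `a ← a+1`). -/
def contractLoop {n : ℕ} [NeZero n] (π : Equiv.Perm (Fin n)) (j : Fin n) :
    ℕ → (Fin n → Fin n) → (Fin n → ℤ) → Fin n → Fin n →
      (Fin n → Fin n) × (Fin n → ℤ)
  | 0, μ, c, q, a => (Function.update μ a q, c)
  | fuel + 1, μ, c, q, a =>
    if π a = j then (Function.update μ a q, c)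
    else if q = a ∨ (cval (a + 1) q < cval (a + 1) (π a) ∧
                      cval (a + 1) (π a) < cval (a + 1) j) then
      contractLoop π j fuel (Function.update μ a q)
        (if q = a then Function.update c a 1 else c) (π a) (a + 1)
    else
      contractLoop π j fuel μ c q (a + 1)

/-- The contraction algorithm: output `(μ, col')` from `(π, col)` and `j`. -/
def contractAlg {n : ℕ} [NeZero n] (π : Equiv.Perm (Fin n)) (col : Fin n → ℤ) (j : Fin n) :
    (Fin n → Fin n) × (Fin n → ℤ) :=
  contractLoop π j n (Function.update (⇑π) j j) (Function.update col j 1) (π j) (j + 1)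

/-- One pass of the restriction algorithm (the loop walks `a ← a-1`). -/
def restrictLoop {n : ℕ} [NeZero n] (π : Equiv.Perm (Fin n)) (j : Fin n) :
    ℕ → (Fin n → Fin n) → (Fin n → ℤ) → Fin n → Fin n →
      (Fin n → Fin n) × (Fin n → ℤ)
  | 0, μ, c, q, a => (Function.update μ a q, c)
  | fuel + 1, μ, c, q, a =>
    if π a = j then (Function.update μ a q, c)
    else if q = a ∨ (cval a j < cval a (π a) ∧ cval a (π a) < cval a q) then
      restrictLoop π j fuel (Function.update μ a q)
        (if q = a then Function.update c a 1 else c) (π a) (a - 1)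
    else
      restrictLoop π j fuel μ c q (a - 1)

/-- The restriction algorithm: output `(μ, col')` from `(π, col)` and `j`. -/
def restrictAlg {n : ℕ} [NeZero n] (π : Equiv.Perm (Fin n)) (col : Fin n → ℤ) (j : Fin n) :
    (Fin n → Fin n) × (Fin n → ℤ) :=
  restrictLoop π j n (Function.update (⇑π) j j) (Function.update col j 1) (π j) (j - 1)


/-!
Gale comparisons `A ≤_t B` are made by counting the elements of `A` and `B` in initial intervals
of the cyclic order starting at `t`. Walking along the necklace from `a` to `j` only removes
elements that have been passed, so in the order `≤_a` every element of `I_a \ I_j` comes before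
`j` and every element of `I_j \ I_a` comes after it.

If `j ∈ I_a`, then `I_a` is itself the `≤_a`-minimal basis containing `j`. Otherwise put
`m = max_a (I_a \ I_j)` and `T = I_a - m + j`. A cyclic interval containing `j` but not `m` meets
`I_j` in more elements than `I_a`, so `T ∈ M`. Conversely, let `H ∈ M` contain `j`, and let
`m ≤_a c <_a j`. Compare `H` with `I_a` on the interval from `a` to `j`, and with `I_j` on the
interval from `j` around to `c`. This shows that `H` has fewer elements than `I_a` up to `c`.
Hence `T ≤_a H`, and `K_a = T`.
-/

section CyclicOrder

variable {n : ℕ}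

lemma cval_eq_ite (t x : Fin n) :
    cval t x = if t.val ≤ x.val then x.val - t.val else x.val + n - t.val := by
  rw [cval, Fin.val_sub]
  have := t.isLt
  split_ifs with h
  · rw [show n - t.val + x.val = x.val - t.val + n by omega, Nat.add_mod_right,
      Nat.mod_eq_of_lt (by omega)]
  · rw [Nat.mod_eq_of_lt (by omega)]; omega

lemma cval_lt (t x : Fin n) : cval t x < n := (x - t).isLt

lemma cval_injective (t : Fin n) : Function.Injective (cval t) := by
  intro x y h
  have := x.isLt; have := y.isLt
  rw [cval_eq_ite, cval_eq_ite] at h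
  ext
  split_ifs at h <;> omega

@[simp]
lemma cval_self (t : Fin n) : cval t t = 0 := by
  simp [cval_eq_ite]

lemma cval_eq_zero_iff {t x : Fin n} : cval t x = 0 ↔ x = t := by
  rw [← cval_self t, (cval_injective t).eq_iff]

lemma cval_rebase (a t x : Fin n) :
    cval t x = if cval a t ≤ cval a x then cval a x - cval a t else cval a x + n - cval a t := by
  have := a.isLt; have := t.isLt; have := x.isLt
  simp only [cval_eq_ite]
  split_ifs <;> omega

lemma cval_sub_one [NeZero n] {t b : Fin n} (hb : b ≠ t) : cval t (b - 1) = cval t b - 1 := by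
  rw [cval, cval, sub_right_comm, Fin.val_sub_one_of_ne_zero (sub_ne_zero.2 hb)]

end CyclicOrder

section GaleOrder

lemma List.forall₂_le_iff_countP_le {α : Type*} [LinearOrder α] :
    ∀ {l₁ l₂ : List α}, l₁.Pairwise (· ≤ ·) → l₂.Pairwise (· ≤ ·) →
      (List.Forall₂ (· ≤ ·) l₁ l₂ ↔
        l₁.length = l₂.length ∧ ∀ c, l₂.countP (· ≤ c) ≤ l₁.countP (· ≤ c))
  | [], [], _, _ => by simp
  | [], _ :: _, _, _ => by simp
  | _ :: _, [], _, _ => by simp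
  | a :: l₁, b :: l₂, h₁, h₂ => by
    have tail_countP (c : α) (hbc : ¬ b ≤ c) : l₂.countP (· ≤ c) = 0 :=
      List.countP_eq_zero.2 fun x hx hxc =>
        hbc ((List.rel_of_pairwise_cons h₂ hx).trans (by simpa using hxc))
    rw [List.forall₂_cons, List.forall₂_le_iff_countP_le h₁.of_cons h₂.of_cons]
    simp only [List.length_cons, Nat.add_right_cancel_iff, List.countP_cons, decide_eq_true_eq]
    constructor
    · rintro ⟨hab, hlen, hcount⟩
      refine ⟨hlen, fun c => ?_⟩
      by_cases hbc : b ≤ c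
      · simp only [hbc, hab.trans hbc, if_true]
        exact Nat.add_le_add_right (hcount c) 1
      · simp [hbc, tail_countP c hbc]
    · rintro ⟨hlen, hcount⟩
      have hab : a ≤ b := by
        by_contra! hba
        have hl₁ : l₁.countP (· ≤ b) = 0 :=
          List.countP_eq_zero.2 fun x hx hxb =>
            (hba.trans_le (List.rel_of_pairwise_cons h₁ hx)).not_ge (by simpa using hxb)
        have := hcount b
        rw [if_pos le_rfl, if_neg hba.not_ge, hl₁] at this
        omega
      refine ⟨hab, hlen, fun c => ?_⟩
      by_cases hbc : b ≤ c
      · have := hcount c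
        simp only [hbc, hab.trans hbc, if_true] at this
        omega
      · simp [tail_countP c hbc]

lemma Finset.countP_sort {α : Type*} [LinearOrder α] (s : Finset α) (p : α → Prop)
    [DecidablePred p] : (s.sort (· ≤ ·)).countP (fun x => decide (p x)) = #{x ∈ s | p x} := by
  rw [← Multiset.coe_countP, Finset.sort_eq, Multiset.countP_eq_card_filter]
  rfl

variable {n : ℕ} {f : Fin n → ℕ}

lemma galeLEKey_iff (hf : Function.Injective f) (A B : Finset (Fin n)) :
    galeLEKey f A B ↔ #A = #B ∧ ∀ c, #{x ∈ B | f x ≤ c} ≤ #{x ∈ A | f x ≤ c} := by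
  rw [galeLEKey, List.forall₂_le_iff_countP_le (Finset.pairwise_sort _ _)
    (Finset.pairwise_sort _ _)]
  simp only [Finset.length_sort, Finset.countP_sort, Finset.filter_image,
    Finset.card_image_of_injective _ hf]

lemma List.Forall₂.eq_of_le_of_ge {α : Type*} [PartialOrder α] :
    ∀ {l₁ l₂ : List α}, List.Forall₂ (· ≤ ·) l₁ l₂ → List.Forall₂ (· ≤ ·) l₂ l₁ → l₁ = l₂
  | [], [], _, _ => rfl
  | _ :: _, _ :: _, .cons h₁ t₁, .cons h₂ t₂ => by
    rw [le_antisymm h₁ h₂, t₁.eq_of_le_of_ge t₂]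

lemma galeLEKey_antisymm (hf : Function.Injective f) {A B : Finset (Fin n)}
    (hAB : galeLEKey f A B) (hBA : galeLEKey f B A) : A = B := by
  have hsort := List.Forall₂.eq_of_le_of_ge hAB hBA
  apply Finset.image_injective hf
  rw [← Finset.sort_toFinset (A.image f) (· ≤ ·), hsort, Finset.sort_toFinset]

end GaleOrder

section Counting

variable {α : Type*} [DecidableEq α] {A B : Finset α} {p : α → Prop} [DecidablePred p] {m j : α}

lemma Finset.card_filter_add_card_filter_sdiff (A B : Finset α) (p : α → Prop)
    [DecidablePred p] :
    #{x ∈ A | p x} + #{x ∈ B \ A | p x} = #{x ∈ B | p x} + #{x ∈ A \ B | p x} := by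
  rw [← card_union_of_disjoint (disjoint_filter_filter disjoint_sdiff),
    ← card_union_of_disjoint (disjoint_filter_filter disjoint_sdiff), ← filter_union,
    ← filter_union, union_sdiff_self_eq_union, union_sdiff_self_eq_union, union_comm]

lemma Finset.card_filter_eq_of_sdiff (hcard : #A = #B) (hA : ∀ x ∈ A \ B, p x)
    (hB : ∀ x ∈ B \ A, p x) : #{x ∈ A | p x} = #{x ∈ B | p x} := by
  have := card_filter_add_card_filter_sdiff A B p
  rw [filter_true_of_mem hA, filter_true_of_mem hB, card_sdiff_comm hcard] at this
  omega

lemma Finset.card_filter_lt_of_exchange (hcard : #A = #B) (hm : m ∈ A \ B) (hpm : ¬ p m)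
    (hj : j ∈ B \ A) (hpj : p j) (h : (∀ x ∈ A \ B, ¬ p x) ∨ ∀ x ∈ B \ A, p x) :
    #{x ∈ A | p x} < #{x ∈ B | p x} := by
  have key := card_filter_add_card_filter_sdiff A B p
  rcases h with hA | hB
  · have : 0 < #{x ∈ B \ A | p x} := card_pos.2 ⟨j, mem_filter.2 ⟨hj, hpj⟩⟩
    rw [filter_false_of_mem hA, card_empty] at key
    omega
  · have : #{x ∈ A \ B | p x} < #(A \ B) := card_lt_card (filter_ssubset.2 ⟨m, hm, hpm⟩)
    rw [filter_true_of_mem hB, ← card_sdiff_comm hcard] at key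
    omega

lemma Finset.card_insert_erase (hm : m ∈ A) (hj : j ∉ A) : #(insert j (A.erase m)) = #A := by
  rw [card_insert_of_notMem (fun h => hj (mem_of_mem_erase h)), card_erase_add_one hm]

lemma Finset.card_filter_insert_erase (hm : m ∈ A) (hj : j ∉ A) :
    #{x ∈ insert j (A.erase m) | p x} + (if p m then 1 else 0) =
      #{x ∈ A | p x} + (if p j then 1 else 0) := by
  rw [filter_insert, filter_erase]
  have hj' : j ∉ {x ∈ A | p x}.erase m := fun h => hj (mem_filter.1 (mem_of_mem_erase h)).1
  by_cases hpm : p m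
  · rw [if_pos hpm, ← card_erase_add_one (mem_filter.2 ⟨hm, hpm⟩)]
    split_ifs <;> simp [card_insert_of_notMem hj']
  · rw [if_neg hpm, erase_eq_of_notMem fun h => hpm (mem_filter.1 h).2]
    split_ifs <;> simp [card_insert_of_notMem fun h => hj (mem_filter.1 h).1]

end Counting

def initCount {n : ℕ} (t : Fin n) (c : ℕ) (A : Finset (Fin n)) : ℕ := #{x ∈ A | cval t x ≤ c}

section Gale

variable {n : ℕ} {t : Fin n} {A B : Finset (Fin n)}

lemma galeLE_iff : galeLE t A B ↔ #A = #B ∧ ∀ c, initCount t c B ≤ initCount t c A :=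
  galeLEKey_iff (cval_injective t) A B

lemma galeLE_antisymm (hAB : galeLE t A B) (hBA : galeLE t B A) : A = B :=
  galeLEKey_antisymm (cval_injective t) hAB hBA

lemma initCount_zero (t : Fin n) (A : Finset (Fin n)) :
    initCount t 0 A = if t ∈ A then 1 else 0 := by
  simp only [initCount, Nat.le_zero, cval_eq_zero_iff, filter_eq']
  split_ifs <;> rfl

lemma mem_of_galeLE (h : galeLE t A B) (ht : t ∈ B) : t ∈ A := by
  by_contra hA
  have := (galeLE_iff.1 h).2 0
  rw [initCount_zero, initCount_zero, if_pos ht, if_neg hA] at this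
  omega

end Gale

section Windows

variable {n : ℕ} {a b m t x : Fin n} {c : ℕ}

lemma cval_lt_cval_iff (hab : a ≠ b) : cval b x < cval b a ↔ cval a b ≤ cval a x := by
  have hb : cval a b ≠ 0 := fun h => hab (cval_eq_zero_iff.1 h).symm
  have := cval_lt a x
  rw [cval_rebase a b x, cval_rebase a b a, cval_self]
  split_ifs <;> omega

lemma cval_window_dichotomy (hmb : cval a m < cval a b) (hb : cval t b ≤ c) (hm : c < cval t m) :
    (∀ y, cval a y ≤ cval a m → c < cval t y) ∨ (∀ y, cval a b ≤ cval a y → cval t y ≤ c) := by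
  have := cval_lt a t; have := cval_lt a m; have := cval_lt a b
  rw [cval_rebase a t b] at hb
  rw [cval_rebase a t m] at hm
  simp only [cval_rebase a t]
  by_cases hwrap : cval a t + c < n
  · refine .inl fun y hy => ?_
    split_ifs at * <;> omega
  · refine .inr fun y hy => ?_
    have := cval_lt a y
    split_ifs at * <;> omega

lemma cval_le_wrap_iff :
    cval b x ≤ n - cval a b + c ↔ cval a b ≤ cval a x ∨ cval a x ≤ c := by
  have := cval_lt a x; have := cval_lt a b
  rw [cval_rebase a b x]
  split_ifs <;> omega

lemma initCount_wrap_add (hc : c < cval a b) (X : Finset (Fin n)) :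
    initCount b (n - cval a b + c) X + initCount a (cval a b) X =
      initCount a c X + #X + if b ∈ X then 1 else 0 := by
  have pointwise (y : Fin n) :
      ((if cval b y ≤ n - cval a b + c then 1 else 0) + if cval a y ≤ cval a b then 1 else 0) =
        (if cval a y ≤ c then 1 else 0) + 1 + if y = b then 1 else 0 := by
    simp only [cval_le_wrap_iff, ← (cval_injective a).eq_iff]
    split_ifs <;> omega
  simp only [initCount, card_filter]
  rw [← sum_add_distrib, sum_congr rfl fun y _ => pointwise y, sum_add_distrib, sum_add_distrib,
    sum_ite_eq', ← card_eq_sum_ones]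

end Windows

namespace IsGrassmannNecklace

variable {n : ℕ} [NeZero n] {I : Fin n → Finset (Fin n)} {a b m t x : Fin n}

lemma mem_add_one (hI : IsGrassmannNecklace I) {i : Fin n} (hx : x ∈ I i) (hxi : x ≠ i) :
    x ∈ I (i + 1) := by
  by_cases hi : i ∈ I i
  · obtain ⟨k, hk⟩ := (hI i).1 hi
    rw [hk]
    exact mem_insert_of_mem (mem_sdiff.2 ⟨hx, by simpa using hxi⟩)
  · rwa [(hI i).2 hi]

lemma mem_of_cval_le (hI : IsGrassmannNecklace I) (hx : x ∈ I t) (hb : cval t b ≤ cval t x) :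
    x ∈ I b := by
  induction hd : cval t b generalizing b with
  | zero => rwa [cval_eq_zero_iff.1 hd]
  | succ d ih =>
    have hbt : b ≠ t := by rintro rfl; simp at hd
    have hprev : cval t (b - 1) = d := by rw [cval_sub_one hbt, hd]; rfl
    have hxb : x ≠ b - 1 := by rintro rfl; omega
    simpa using hI.mem_add_one (ih (by omega) hprev) hxb

lemma cval_lt_of_mem_sdiff (hI : IsGrassmannNecklace I) (hx : x ∈ I a \ I b) :
    cval a x < cval a b := by
  by_contra! h
  exact (mem_sdiff.1 hx).2 (hI.mem_of_cval_le (mem_sdiff.1 hx).1 h)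

lemma cval_le_of_mem_sdiff (hI : IsGrassmannNecklace I) (hx : x ∈ I b \ I a) :
    cval a b ≤ cval a x := by
  have hab : a ≠ b := by rintro rfl; simp at hx
  exact (cval_lt_cval_iff hab).1 (hI.cval_lt_of_mem_sdiff hx)

lemma initCount_le (hI : IsGrassmannNecklace I) (hcard : #(I t) = #(I b)) (c : ℕ) :
    initCount t c (I b) ≤ initCount t c (I t) := by
  by_cases hbc : cval t b ≤ c
  · have hsub : {x ∈ I t | ¬ cval t x ≤ c} ⊆ {x ∈ I b | ¬ cval t x ≤ c} := fun x hx => by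
      rw [mem_filter] at hx ⊢
      exact ⟨hI.mem_of_cval_le hx.1 (by omega), hx.2⟩
    have := card_le_card hsub
    have := card_filter_add_card_filter_not (s := I t) (p := fun x => cval t x ≤ c)
    have := card_filter_add_card_filter_not (s := I b) (p := fun x => cval t x ≤ c)
    unfold initCount
    omega
  · refine card_le_card fun x hx => ?_
    rw [mem_filter] at hx ⊢
    refine ⟨hI.mem_of_cval_le hx.1 ?_, hx.2⟩
    have hbt : t ≠ b := by rintro rfl; simp at hbc
    exact not_lt.1 fun h => by have := (cval_lt_cval_iff hbt).1 h; omega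

lemma galeLE_of_card_eq (hI : IsGrassmannNecklace I) (hcard : ∀ s s', #(I s) = #(I s'))
    (t b : Fin n) : galeLE t (I t) (I b) :=
  galeLE_iff.2 ⟨hcard t b, hI.initCount_le (hcard t b)⟩

lemma initCount_lt_of_exchange (hI : IsGrassmannNecklace I) (hcard : #(I a) = #(I b))
    (hm : m ∈ I a \ I b) (hmax : ∀ y ∈ I a \ I b, cval a y ≤ cval a m) (hb : b ∈ I b \ I a)
    {t : Fin n} {c : ℕ} (hbc : cval t b ≤ c) (hmc : c < cval t m) :
    initCount t c (I a) < initCount t c (I b) := by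
  refine card_filter_lt_of_exchange hcard hm (not_le.2 hmc) hb hbc ?_
  rcases cval_window_dichotomy (hI.cval_lt_of_mem_sdiff hm) hbc hmc with h | h
  · exact .inl fun y hy => not_le.2 (h y (hmax y hy))
  · exact .inr fun y hy => h y (hI.cval_le_of_mem_sdiff hy)

lemma initCount_lt_of_mem (hI : IsGrassmannNecklace I) (hcard : #(I a) = #(I b))
    (hb : b ∈ I b \ I a) {H : Finset (Fin n)} (hH : ∀ t, galeLE t (I t) H) (hbH : b ∈ H)
    {c : ℕ} (hc : c < cval a b) (hD : ∀ y ∈ I a \ I b, cval a y ≤ c) :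
    initCount a c H < initCount a c (I a) := by
  have hwindow : initCount b (n - cval a b + c) (I b) = initCount b (n - cval a b + c) (I a) :=
    card_filter_eq_of_sdiff hcard.symm
      (fun y hy => cval_le_wrap_iff.2 (.inl (hI.cval_le_of_mem_sdiff hy)))
      (fun y hy => cval_le_wrap_iff.2 (.inr (hD y hy)))
  have hHb := (galeLE_iff.1 (hH b)).2 (n - cval a b + c)
  obtain ⟨hHcard, hHa⟩ := galeLE_iff.1 (hH a)
  have hsumH := initCount_wrap_add hc H
  have hsumI := initCount_wrap_add hc (I a)
  rw [if_pos hbH] at hsumH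
  rw [if_neg (mem_sdiff.1 hb).2] at hsumI
  have := hHa (cval a b)
  omega

lemma galeLE_insert_erase (hI : IsGrassmannNecklace I) (hcard : ∀ s s', #(I s) = #(I s'))
    (hm : m ∈ I a \ I b) (hmax : ∀ y ∈ I a \ I b, cval a y ≤ cval a m) (hb : b ∈ I b \ I a)
    (t : Fin n) : galeLE t (I t) (insert b ((I a).erase m)) := by
  have hcardT := card_insert_erase (mem_sdiff.1 hm).1 (mem_sdiff.1 hb).2
  refine galeLE_iff.2 ⟨(hcard t a).trans hcardT.symm, fun c => ?_⟩
  have hswap : initCount t c (insert b ((I a).erase m)) + (if cval t m ≤ c then 1 else 0) =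
      initCount t c (I a) + (if cval t b ≤ c then 1 else 0) :=
    card_filter_insert_erase (mem_sdiff.1 hm).1 (mem_sdiff.1 hb).2
  have hIa := hI.initCount_le (hcard t a) c
  by_cases hbc : cval t b ≤ c
  · by_cases hmc : cval t m ≤ c
    · simp only [hbc, hmc, if_true] at hswap
      omega
    · have := hI.initCount_lt_of_exchange (hcard a b) hm hmax hb hbc (not_le.1 hmc)
      have := hI.initCount_le (hcard t b) c
      simp only [hbc, hmc, if_true, if_false] at hswap
      omega
  · simp only [hbc, if_false] at hswap
    omega

lemma insert_erase_galeLE (hI : IsGrassmannNecklace I) (hcard : #(I a) = #(I b))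
    (hm : m ∈ I a \ I b) (hmax : ∀ y ∈ I a \ I b, cval a y ≤ cval a m) (hb : b ∈ I b \ I a)
    {H : Finset (Fin n)} (hH : ∀ t, galeLE t (I t) H) (hbH : b ∈ H) :
    galeLE a (insert b ((I a).erase m)) H := by
  obtain ⟨hHcard, hHa⟩ := galeLE_iff.1 (hH a)
  refine galeLE_iff.2
    ⟨(card_insert_erase (mem_sdiff.1 hm).1 (mem_sdiff.1 hb).2).trans hHcard, fun c => ?_⟩
  have hswap : initCount a c (insert b ((I a).erase m)) + (if cval a m ≤ c then 1 else 0) =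
      initCount a c (I a) + (if cval a b ≤ c then 1 else 0) :=
    card_filter_insert_erase (mem_sdiff.1 hm).1 (mem_sdiff.1 hb).2
  have := hHa c
  have := hI.cval_lt_of_mem_sdiff hm
  by_cases hmc : cval a m ≤ c
  · by_cases hbc : cval a b ≤ c
    · simp only [hbc, hmc, if_true] at hswap
      omega
    · have := hI.initCount_lt_of_mem hcard hb hH hbH (not_le.1 hbc)
        fun y hy => (hmax y hy).trans hmc
      simp only [hbc, hmc, if_true, if_false] at hswap
      omega
  · simp only [hmc, if_false] at hswap
    split_ifs at hswap <;> omega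

end IsGrassmannNecklace

lemma cmax_eq_singleton {n : ℕ} {a m : Fin n} {D : Finset (Fin n)} (hm : m ∈ D)
    (hmax : ∀ y ∈ D, cval a y ≤ cval a m) : cmax a D = {m} := by
  ext x
  simp only [cmax, mem_filter, mem_singleton]
  refine ⟨fun ⟨hx, hxmax⟩ => cval_injective a (le_antisymm (hmax x hx) (hxmax m hm)), ?_⟩
  rintro rfl
  exact ⟨hm, hmax⟩

theorem contraction_necklace_formula_general (n : ℕ) [NeZero n] (I : Fin n → Finset (Fin n))
    (hI : IsGrassmannNecklace I) (j : Fin n)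
    (K : Fin n → Finset (Fin n))
    -- `K_a` is the `≤_a`-minimal basis of `M'`:
    (hK : ∀ a : Fin n,
      (j ∈ K a ∧ ∀ t : Fin n, galeLE t (I t) (K a)) ∧
      ∀ H : Finset (Fin n), (j ∈ H ∧ ∀ t : Fin n, galeLE t (I t) H) → galeLE a (K a) H) :
    ∀ a : Fin n,
      (j ∈ I a → K a = I a) ∧
      (j ∉ I a → K a = insert j (I a \ cmax a (I a \ I j))) := by
  intro a
  have hcard : ∀ s s', #(I s) = #(I s') := fun s s' =>
    (galeLE_iff.1 ((hK j).1.2 s)).1.trans (galeLE_iff.1 ((hK j).1.2 s')).1.symm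
  refine ⟨fun hja => galeLE_antisymm
    ((hK a).2 _ ⟨hja, fun t => hI.galeLE_of_card_eq hcard t a⟩) ((hK a).1.2 a), fun hja => ?_⟩
  have hj : j ∈ I j \ I a := mem_sdiff.2 ⟨mem_of_galeLE ((hK j).1.2 j) (hK j).1.1, hja⟩
  obtain ⟨m, hm, hmax⟩ := exists_max_image (I a \ I j) (cval a) <| by
    rw [← card_pos, card_sdiff_comm (hcard a j)]
    exact card_pos.2 ⟨j, hj⟩
  rw [cmax_eq_singleton hm hmax, ← erase_eq]
  exact galeLE_antisymm
    ((hK a).2 _ ⟨mem_insert_self _ _, hI.galeLE_insert_erase hcard hm hmax hj⟩)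
    (hI.insert_erase_galeLE (hcard a j) hm hmax hj (hK a).1.2 (hK a).1.1)

/-- the Grassmann necklace `(K_1,…,K_n)` of `M' = {H ∈ M : j ∈ H}` satisfies
`K_a = I_a` when `j ∈ I_a` and `K_a = (I_a \ {max_a(I_a \ I_j)}) ∪ {j}` otherwise. -/
theorem contraction_necklace_formula (n : ℕ) [NeZero n] (I : Fin n → Finset (Fin n))
    (hI : IsGrassmannNecklace I) (j : Fin n)
    (hj : I (j + 1) ≠ I j)  -- `j` is not a fixed point of the decorated permutation
    (K : Fin n → Finset (Fin n))
    -- `K_a` is the `≤_a`-minimal basis of `M'`: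
    (hK : ∀ a : Fin n,
      (j ∈ K a ∧ ∀ t : Fin n, galeLE t (I t) (K a)) ∧
      ∀ H : Finset (Fin n), (j ∈ H ∧ ∀ t : Fin n, galeLE t (I t) H) → galeLE a (K a) H) :
    ∀ a : Fin n,
      (j ∈ I a → K a = I a) ∧
      (j ∉ I a → K a = insert j (I a \ cmax a (I a \ I j))) :=
  contraction_necklace_formula_general n I hI j K hK
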